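/- For a formal polynomial Q of degree n over the sign semiring B_s (equivalently over the hyperfield of signs), with coefficients in {0, 1, ⊖1}, the Baker–Lorscheid multiplicity of the root 1 equals the number of sign changes in the sequence of nonzero coefficients of Q, and the multiplicity of the root ⊖1 equals the number of sign changes in the coefficients of Q(⊖Y). -/

import Mathlib

set_option linter.unusedVariables false

/-- The symmetrized Boolean semiring `B_s = {0, 𝟙, ⊖𝟙, 𝟙°}`, equivalent to
the hyperfield of signs. -/
inductive Bs : Type
  | zero : Bs
  | one : Bs
  | negOne : Bs
  | bal : Bs
  deriving DecidableEq

namespace Bs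

/-- The negation map `⊖`. -/
def sneg : Bs → Bs
  | zero => zero
  | one => negOne
  | negOne => one
  | bal => bal

/-- Addition of `B_s` (idempotent; `𝟙 ⊕ ⊖𝟙 = 𝟙°`, `𝟙°` absorbing among
nonzero elements). -/
def add : Bs → Bs → Bs
  | zero, x => x
  | x, zero => x
  | bal, _ => bal
  | _, bal => bal
  | one, one => one
  | negOne, negOne => negOne
  | one, negOne => bal
  | negOne, one => bal

/-- Multiplication of `B_s`. -/
def mul : Bs → Bs → Bs
  | zero, _ => zero
  | _, zero => zero
  | one, x => x
  | x, one => x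
  | negOne, negOne => one
  | negOne, bal => bal
  | bal, negOne => bal
  | bal, bal => bal

/-- Balanced elements `{0, 𝟙°}`. -/
def isBalanced : Bs → Prop
  | zero => True
  | bal => True
  | _ => False

/-- Signed elements `B_s^∨ = {0, 𝟙, ⊖𝟙}`. -/
def isSigned : Bs → Prop
  | bal => False
  | _ => True

/-- The balance relation `x ∇ y`. -/
def nabla (x y : Bs) : Prop := isBalanced (add x (sneg y))

/-- Powers in `B_s`. -/
def spow (x : Bs) : ℕ → Bs
  | 0 => one
  | k + 1 => mul x (spow x k)

/-- Sum of a list of elements of `B_s`. -/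
def lsum : List Bs → Bs := List.foldr add zero

/-- The polynomial function `Q̂(y)` of a formal polynomial of degree ≤ `n`. -/
def phat (Q : ℕ → Bs) (n : ℕ) (y : Bs) : Bs :=
  lsum ((List.range (n + 1)).map fun k => mul (Q k) (spow y k))

/-- `a` is a root of the finitely supported formal polynomial `Q`. -/
def IsRoot (Q : ℕ → Bs) (a : Bs) : Prop :=
  ∃ N, (∀ k, N < k → Q k = zero) ∧ nabla (phat Q N a) zero

/-- The coefficientwise balance relation `λ P ∇ (Y ⊖ a) Q`. -/
def balFactor (a lam : Bs) (P Q : ℕ → Bs) : Prop :=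
  (∀ k, 1 ≤ k → nabla (mul lam (P k)) (add (Q (k - 1)) (mul (sneg a) (Q k)))) ∧
  nabla (mul lam (P 0)) (mul (sneg a) (Q 0))

/-- The Baker–Lorscheid multiplicity of `a` as a root of `P` is at least `m`. -/
def MultGe (a : Bs) : ℕ → (ℕ → Bs) → Prop
  | 0, _ => True
  | m + 1, P => IsRoot P a ∧ ∃ (lam : Bs) (Q : ℕ → Bs),
      isSigned lam ∧ lam ≠ zero ∧ (∀ k, isSigned (Q k)) ∧
      (∃ N, ∀ k, N < k → Q k = zero) ∧ balFactor a lam P Q ∧ MultGe a m Q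

/-- The Baker–Lorscheid multiplicity of `a` as a root of `P` equals `m`. -/
def MultEq (a : Bs) (P : ℕ → Bs) (m : ℕ) : Prop :=
  MultGe a m P ∧ ¬ MultGe a (m + 1) P

/-- Number of sign changes in the sequence of nonzero coefficients: indices `i`
such that for some `k ≥ 1`, `Q_i = ⊖ Q_{i+k} ≠ 0` with all intermediate
coefficients zero. -/
noncomputable def signChanges (Q : ℕ → Bs) : ℕ :=
  Set.ncard {i : ℕ | ∃ k, 1 ≤ k ∧ Q i ≠ zero ∧ Q i = sneg (Q (i + k)) ∧
    ∀ j, i < j → j < i + k → Q j = zero}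

end Bs

/-!
Write `Q ∇ (Y ⊖ 1) R` coefficientwise as `Q k ∇ R (k - 1) ⊖ R k`. Scanning the coefficients
upwards, the number of sign changes of `R`, plus one while the last nonzero coefficients of `Q`
and `R` agree, never exceeds the number of sign changes of `Q`. The leading coefficients of `Q`
and `R` agree, so every division by `Y ⊖ 1` costs a sign change. Conversely, a sign change puts
both `𝟙` and `⊖𝟙` among the coefficients, so `𝟙` is a root, and the classical quotient
`R m = ⊖(Q 0 + ⋯ + Q m) = Q (m + 1) + ⋯` can be read off single coefficients so that it loses
exactly the first sign change. The root `⊖𝟙` is reduced to `𝟙` by the substitution `Y ↦ ⊖Y`.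
-/

namespace Bs

instance : Fintype Bs where
  elems := {zero, one, negOne, bal}
  complete x := by cases x <;> decide

instance : DecidablePred isSigned
  | bal => isFalse id
  | zero | one | negOne => isTrue trivial

instance : DecidablePred isBalanced
  | zero | bal => isTrue trivial
  | one | negOne => isFalse id

instance (x y : Bs) : Decidable (nabla x y) := inferInstanceAs (Decidable (isBalanced _))

section Arithmetic

@[simp] lemma sneg_zero : sneg zero = zero := rfl

@[simp] lemma sneg_one : sneg one = negOne := rfl

@[simp] lemma sneg_sneg : ∀ x : Bs, sneg (sneg x) = x := by decide

@[simp] lemma sneg_eq_zero : ∀ {x : Bs}, sneg x = zero ↔ x = zero := by decide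

@[simp] lemma add_zero_left (x : Bs) : add zero x = x := rfl

@[simp] lemma add_zero_right : ∀ x : Bs, add x zero = x := by decide

@[simp] lemma mul_one_left : ∀ x : Bs, mul one x = x := by decide

@[simp] lemma mul_one_right : ∀ x : Bs, mul x one = x := by decide

@[simp] lemma mul_negOne_left : ∀ x : Bs, mul negOne x = sneg x := by decide

lemma mul_sneg : ∀ x y : Bs, mul x (sneg y) = sneg (mul x y) := by decide

lemma sneg_mul : ∀ x y : Bs, mul (sneg x) y = sneg (mul x y) := by decide

lemma mul_eq_zero_iff :
    ∀ {l : Bs} (x : Bs), isSigned l → l ≠ zero → (mul l x = zero ↔ x = zero) := by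
  decide

lemma mul_left_inj :
    ∀ {l : Bs} (x y : Bs), isSigned l → l ≠ zero → (mul l x = mul l y ↔ x = y) := by
  decide

lemma isSigned.sneg : ∀ {x : Bs}, isSigned x → isSigned (sneg x) := by decide

lemma isSigned.mul : ∀ {x y : Bs}, isSigned x → isSigned y → isSigned (mul x y) := by decide

lemma isSigned.eq_of_nabla : ∀ {x y : Bs}, isSigned x → isSigned y → nabla x y → x = y := by
  decide

lemma spow_one : ∀ k, spow one k = one
  | 0 => rfl
  | k + 1 => by rw [spow, spow_one k]; rfl

lemma spow_sneg (a : Bs) : ∀ k, spow (sneg a) k = if Even k then spow a k else sneg (spow a k)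
  | 0 => by simp [spow]
  | k + 1 => by
    by_cases hk : Even k <;> simp [spow, spow_sneg a k, hk, Nat.even_add_one, sneg_mul, mul_sneg]

lemma add_lsum_of_mem {x : Bs} {l : List Bs} (h : x ∈ l) : add x (lsum l) = lsum l := by
  induction l with
  | nil => simp at h
  | cons y t ih =>
    have hidem : ∀ a s : Bs, add a (add a s) = add a s := by decide
    have hcomm : ∀ a b s : Bs, add a (add b s) = add b (add a s) := by decide
    rcases List.mem_cons.1 h with rfl | h
    · exact hidem _ _
    · exact (hcomm x y _).trans (congrArg (add y) (ih h))

lemma lsum_eq_bal {x : Bs} {l : List Bs} (hx : isSigned x) (hx0 : x ≠ zero) (h : x ∈ l)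
    (h' : sneg x ∈ l) : lsum l = bal := by
  rw [← add_lsum_of_mem h, ← add_lsum_of_mem h']
  have : ∀ x s : Bs, isSigned x → x ≠ zero → add x (add (sneg x) s) = bal := by decide
  exact this x _ hx hx0

end Arithmetic

section SignChanges

variable {Q : ℕ → Bs}

def prevNonzero (Q : ℕ → Bs) : ℕ → Bs
  | 0 => zero
  | m + 1 => if Q m = zero then prevNonzero Q m else Q m

lemma prevNonzero_succ (m : ℕ) :
    prevNonzero Q (m + 1) = if Q m = zero then prevNonzero Q m else Q m := rfl

lemma isSigned_prevNonzero (hQ : ∀ k, isSigned (Q k)) : ∀ m, isSigned (prevNonzero Q m)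
  | 0 => trivial
  | m + 1 => by
    rw [prevNonzero_succ]
    split
    exacts [isSigned_prevNonzero hQ m, hQ m]

lemma prevNonzero_eq {i j : ℕ} (hij : i < j) (hi : Q i ≠ zero)
    (hz : ∀ l, i < l → l < j → Q l = zero) : prevNonzero Q j = Q i := by
  induction j, hij using Nat.le_induction with
  | base => simp [prevNonzero, hi]
  | succ j hij ih =>
    rw [prevNonzero_succ, if_pos (hz j hij (by omega))]
    exact ih fun l hl hlj => hz l hl (by omega)

lemma exists_of_prevNonzero_ne_zero {m : ℕ} (h : prevNonzero Q m ≠ zero) :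
    ∃ i < m, Q i = prevNonzero Q m ∧ ∀ l, i < l → l < m → Q l = zero := by
  induction m with
  | zero => exact absurd rfl h
  | succ m ih =>
    by_cases hm : Q m = zero
    · rw [prevNonzero_succ, if_pos hm] at h ⊢
      obtain ⟨i, him, hi, hz⟩ := ih h
      refine ⟨i, by omega, hi, fun l hil hlm => ?_⟩
      rcases Nat.lt_succ_iff_lt_or_eq.1 hlm with hlm | rfl
      exacts [hz l hil hlm, hm]
    · rw [prevNonzero_succ, if_neg hm]
      exact ⟨m, by omega, rfl, fun l hml hlm => by omega⟩

open Classical in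
noncomputable def nextNonzero (Q : ℕ → Bs) (i : ℕ) : Bs :=
  if h : ∃ j, i < j ∧ Q j ≠ zero then Q (Nat.find h) else zero

lemma isSigned_nextNonzero (hQ : ∀ k, isSigned (Q k)) (i : ℕ) : isSigned (nextNonzero Q i) := by
  unfold nextNonzero
  split
  exacts [hQ _, trivial]

lemma nextNonzero_eq {i j : ℕ} (hij : i < j) (hj : Q j ≠ zero)
    (hz : ∀ l, i < l → l < j → Q l = zero) : nextNonzero Q i = Q j := by
  have h : ∃ j, i < j ∧ Q j ≠ zero := ⟨j, hij, hj⟩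
  rw [nextNonzero, dif_pos h,
    (Nat.find_eq_iff h).2 ⟨⟨hij, hj⟩, fun l hlj ⟨hil, hl⟩ => hl (hz l hil hlj)⟩]

lemma exists_of_nextNonzero_ne_zero {i : ℕ} (h : nextNonzero Q i ≠ zero) :
    ∃ j, i < j ∧ Q j ≠ zero ∧ ∀ l, i < l → l < j → Q l = zero := by
  by_cases hex : ∃ j, i < j ∧ Q j ≠ zero
  · exact ⟨Nat.find hex, (Nat.find_spec hex).1, (Nat.find_spec hex).2, fun l hil hl =>
      by_contra fun hl0 => Nat.find_min hex hl ⟨hil, hl0⟩⟩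
  · exact absurd (by rw [nextNonzero, dif_neg hex]) h

lemma nextNonzero_eq_ite (i : ℕ) :
    nextNonzero Q i = if Q (i + 1) = zero then nextNonzero Q (i + 1) else Q (i + 1) := by
  split_ifs with h
  · by_cases hi : nextNonzero Q i = zero
    · rw [hi]
      by_contra hne
      obtain ⟨j, hij, hj, hz⟩ := exists_of_nextNonzero_ne_zero (Ne.symm hne)
      have hz' : ∀ l, i < l → l < j → Q l = zero := fun l hil hlj => by
        rcases Nat.lt_or_ge (i + 1) l with hl | hl
        exacts [hz l hl hlj, by rwa [show l = i + 1 by omega]]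
      exact hj (nextNonzero_eq (by omega) hj hz' ▸ hi)
    · obtain ⟨j, hij, hj, hz⟩ := exists_of_nextNonzero_ne_zero hi
      have hij' : i + 1 < j := lt_of_le_of_ne hij fun h' => hj (h' ▸ h)
      rw [nextNonzero_eq hij hj hz, nextNonzero_eq hij' hj fun l hl hlj => hz l (by omega) hlj]
  · exact nextNonzero_eq (by omega) h fun l _ _ => by omega

def IsSignChange (Q : ℕ → Bs) (i j : ℕ) : Prop :=
  i < j ∧ Q i ≠ zero ∧ Q i = sneg (Q j) ∧ ∀ l, i < l → l < j → Q l = zero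

lemma IsSignChange.ne_zero_right {i j : ℕ} (h : IsSignChange Q i j) : Q j ≠ zero := fun hj =>
  h.2.1 (by rw [h.2.2.1, hj]; rfl)

lemma IsSignChange.right_unique {i j j' : ℕ} (h : IsSignChange Q i j)
    (h' : IsSignChange Q i j') : j = j' := by
  by_contra hne
  rcases Nat.lt_or_gt_of_ne hne with hlt | hlt
  exacts [h.ne_zero_right (h'.2.2.2 j h.1 hlt), h'.ne_zero_right (h.2.2.2 j' h'.1 hlt)]

lemma IsSignChange.left_unique {i i' j : ℕ} (h : IsSignChange Q i j)
    (h' : IsSignChange Q i' j) : i = i' := by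
  by_contra hne
  rcases Nat.lt_or_gt_of_ne hne with hlt | hlt
  exacts [h'.2.1 (h.2.2.2 i' hlt h'.1), h.2.1 (h'.2.2.2 i hlt h.1)]

lemma exists_isSignChange_iff {i : ℕ} :
    (∃ j, IsSignChange Q i j) ↔ Q i ≠ zero ∧ Q i = sneg (nextNonzero Q i) := by
  constructor
  · rintro ⟨j, h⟩
    exact ⟨h.2.1, by rw [nextNonzero_eq h.1 h.ne_zero_right h.2.2.2]; exact h.2.2.1⟩
  · rintro ⟨hi, hnext⟩
    obtain ⟨j, hij, hj, hz⟩ := exists_of_nextNonzero_ne_zero (Q := Q) (i := i) fun h0 =>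
      hi (by rw [hnext, h0, sneg_zero])
    exact ⟨j, hij, hi, by rw [hnext, nextNonzero_eq hij hj hz], hz⟩

def IsSignChangeEnd (Q : ℕ → Bs) (j : ℕ) : Prop :=
  Q j ≠ zero ∧ prevNonzero Q j = sneg (Q j)

instance : DecidablePred (IsSignChangeEnd Q) := fun _ => inferInstanceAs (Decidable (_ ∧ _))

lemma isSignChangeEnd_iff {j : ℕ} : IsSignChangeEnd Q j ↔ ∃ i, IsSignChange Q i j := by
  constructor
  · rintro ⟨hj, hprev⟩
    obtain ⟨i, hij, hi, hz⟩ :=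
      exists_of_prevNonzero_ne_zero (Q := Q) (m := j) (by simpa [hprev] using hj)
    exact ⟨i, hij, by rw [hi, hprev]; simpa using hj, by rw [hi, hprev], hz⟩
  · rintro ⟨i, h⟩
    exact ⟨h.ne_zero_right, by rw [prevNonzero_eq h.1 h.2.1 h.2.2.2, h.2.2.1]⟩

lemma signChanges_eq_ncard : signChanges Q = {i | ∃ j, IsSignChange Q i j}.ncard := by
  refine congrArg Set.ncard (Set.ext fun i => ⟨?_, ?_⟩)
  · rintro ⟨k, hk, hi, hik, hz⟩
    exact ⟨i + k, by omega, hi, hik, hz⟩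
  · rintro ⟨j, hij, hi, hij', hz⟩
    obtain ⟨k, rfl⟩ := Nat.exists_eq_add_of_lt hij
    exact ⟨k + 1, by omega, hi, hij', hz⟩

lemma signChanges_eq_ncard_ends : signChanges Q = {j | IsSignChangeEnd Q j}.ncard := by
  rw [signChanges_eq_ncard]
  refine Set.ncard_congr (fun i hi => Classical.choose hi)
    (fun i hi => isSignChangeEnd_iff.2 ⟨i, Classical.choose_spec hi⟩)
    (fun i i' hi hi' h => (Classical.choose_spec hi).left_unique (h ▸ Classical.choose_spec hi'))
    fun j hj => ?_
  obtain ⟨i, hij⟩ := isSignChangeEnd_iff.1 hj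
  exact ⟨i, ⟨j, hij⟩, (Classical.choose_spec ⟨j, hij⟩).right_unique hij⟩

def changesBelow (Q : ℕ → Bs) (M : ℕ) : ℕ :=
  ∑ m ∈ Finset.range M, if Q m ≠ zero ∧ prevNonzero Q m = sneg (Q m) then 1 else 0

lemma changesBelow_succ (m : ℕ) :
    changesBelow Q (m + 1) =
      changesBelow Q m + if Q m ≠ zero ∧ prevNonzero Q m = sneg (Q m) then 1 else 0 :=
  Finset.sum_range_succ _ _

lemma signChanges_eq_changesBelow {M : ℕ} (hM : ∀ k, M ≤ k → Q k = zero) :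
    signChanges Q = changesBelow Q M := by
  have hends :
      {j | IsSignChangeEnd Q j} = ((Finset.range M).filter (IsSignChangeEnd Q) : Set ℕ) := by
    ext j
    simp only [Finset.coe_filter, Finset.mem_range, Set.mem_ofPred_eq, iff_and_self]
    exact fun hj => by_contra fun hMj => hj.1 (hM j (by omega))
  rw [signChanges_eq_ncard_ends, hends, Set.ncard_coe_finset, Finset.card_filter]
  rfl

lemma signChanges_mul {l : Bs} (hl : isSigned l) (hl0 : l ≠ zero) :
    signChanges (fun k => mul l (Q k)) = signChanges Q := by
  unfold signChanges
  congr 1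
  ext i
  simp only [Set.mem_ofPred_eq, ← mul_sneg, mul_left_inj _ _ hl hl0, ne_eq,
    mul_eq_zero_iff _ hl hl0]

end SignChanges

section UpperBound

variable {Q R : ℕ → Bs}

def mulY (R : ℕ → Bs) : ℕ → Bs
  | 0 => zero
  | k + 1 => R k

lemma balFactor_one_iff {l : Bs} {P : ℕ → Bs} :
    balFactor one l P R ↔ ∀ k, nabla (mul l (P k)) (add (mulY R k) (sneg (R k))) := by
  constructor
  · rintro ⟨hk, h0⟩ (_ | k)
    · simpa [mulY] using h0
    · simpa [mulY] using hk (k + 1) (by omega)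
  · intro h
    refine ⟨fun k hk => ?_, by simpa [mulY] using h 0⟩
    obtain ⟨k, rfl⟩ := Nat.exists_eq_add_of_le' hk
    simpa [mulY] using h (k + 1)

lemma mulY_eq_prevNonzero {m : ℕ} (h : mulY R m ≠ zero) : mulY R m = prevNonzero R m := by
  cases m with
  | zero => exact absurd rfl h
  | succ m => exact (if_neg h).symm

/-- The inductive step of `changesBelow_add_agree_le`, a finite check: `q, r` are the last
nonzero coefficients of `Q, R` so far, `a, b` their next coefficients and `c` the coefficient of
`Y * R` at that index. -/
lemma changes_agree_step : ∀ q r a b c : Bs, isSigned q → isSigned r → isSigned a → isSigned b →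
    (c ≠ zero → c = r) → (q = zero → r = zero) → nabla a (add c (sneg b)) →
    (if b ≠ zero ∧ r = sneg b then 1 else 0) +
        (if (if a = zero then q else a) = (if b = zero then r else b) ∧
          (if b = zero then r else b) ≠ zero then 1 else 0) ≤
      (if a ≠ zero ∧ q = sneg a then 1 else 0) + (if q = r ∧ r ≠ zero then 1 else 0) ∧
    ((if a = zero then q else a) = zero → (if b = zero then r else b) = zero) := by
  decide

lemma changesBelow_add_agree_le (hQ : ∀ k, isSigned (Q k)) (hR : ∀ k, isSigned (R k))
    (hbal : ∀ k, nabla (Q k) (add (mulY R k) (sneg (R k)))) : ∀ m,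
    changesBelow R m +
        (if prevNonzero Q m = prevNonzero R m ∧ prevNonzero R m ≠ zero then 1 else 0) ≤
      changesBelow Q m ∧ (prevNonzero Q m = zero → prevNonzero R m = zero)
  | 0 => by simp [changesBelow, prevNonzero]
  | m + 1 => by
    obtain ⟨ih, ih0⟩ := changesBelow_add_agree_le hQ hR hbal m
    obtain ⟨step, step0⟩ := changes_agree_step _ _ _ _ _ (isSigned_prevNonzero hQ m)
      (isSigned_prevNonzero hR m) (hQ m) (hR m) mulY_eq_prevNonzero ih0 (hbal m)
    refine ⟨?_, step0⟩
    rw [changesBelow_succ, changesBelow_succ, prevNonzero_succ, prevNonzero_succ]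
    omega

lemma exists_last_ne_zero {N j : ℕ} (hN : ∀ k, N < k → R k = zero) (hj : R j ≠ zero) :
    ∃ T, R T ≠ zero ∧ ∀ k, T < k → R k = zero := by
  have hjN : j ≤ N := not_lt.1 fun h => hj (hN j h)
  refine ⟨Nat.findGreatest (fun k => R k ≠ zero) N,
    Nat.findGreatest_spec (P := fun k => R k ≠ zero) hjN hj, fun k hk => ?_⟩
  by_contra hk0
  exact Nat.findGreatest_is_greatest hk (not_lt.1 fun h => hk0 (hN k h)) hk0

lemma signChanges_lt_of_balance (hQ : ∀ k, isSigned (Q k)) (hR : ∀ k, isSigned (R k))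
    (hRfin : ∃ N, ∀ k, N < k → R k = zero)
    (hbal : ∀ k, nabla (Q k) (add (mulY R k) (sneg (R k)))) (hQne : ∃ j, Q j ≠ zero) :
    (∃ j, R j ≠ zero) ∧ signChanges R < signChanges Q := by
  obtain ⟨N, hN⟩ := hRfin
  have hRne : ∃ j, R j ≠ zero := by
    by_contra! hR0
    obtain ⟨j, hj⟩ := hQne
    have hmulY : mulY R j = zero := by cases j <;> simp [mulY, hR0]
    exact hj ((hQ j).eq_of_nabla trivial (by simpa [hmulY, hR0] using hbal j))
  obtain ⟨T, hT, hTz⟩ := exists_last_ne_zero hN hRne.choose_spec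
  have hQT : Q (T + 1) = R T :=
    (hQ _).eq_of_nabla (hR T) (by simpa [mulY, hTz (T + 1) (by omega)] using hbal (T + 1))
  have hQz : ∀ k, T + 2 ≤ k → Q k = zero := fun k hk => by
    obtain ⟨k, rfl⟩ := Nat.exists_eq_add_of_le' (show 1 ≤ k by omega)
    exact (hQ _).eq_of_nabla trivial
      (by simpa [mulY, hTz k (by omega), hTz (k + 1) (by omega)] using hbal (k + 1))
  have hleadQ : prevNonzero Q (T + 2) = R T := by
    rw [prevNonzero_eq (i := T + 1) (by omega) (hQT ▸ hT) fun l _ _ => by omega, hQT]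
  have hleadR : prevNonzero R (T + 2) = R T :=
    prevNonzero_eq (by omega) hT fun l hl _ => hTz l hl
  have key := (changesBelow_add_agree_le hQ hR hbal (T + 2)).1
  rw [if_pos ⟨hleadQ.trans hleadR.symm, hleadR ▸ hT⟩] at key
  rw [signChanges_eq_changesBelow hQz,
    signChanges_eq_changesBelow (M := T + 2) fun k hk => hTz k (by omega)]
  exact ⟨hRne, key⟩

lemma le_signChanges_of_multGe :
    ∀ {m : ℕ} {Q : ℕ → Bs}, (∀ k, isSigned (Q k)) → (∃ j, Q j ≠ zero) →
      MultGe one m Q → m ≤ signChanges Q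
  | 0, _, _, _, _ => Nat.zero_le _
  | m + 1, Q, hQ, hQne, hmult => by
    obtain ⟨-, l, R, hl, hl0, hR, hRfin, hbf, hmR⟩ := hmult
    obtain ⟨hRne, hlt⟩ := signChanges_lt_of_balance (fun k => hl.mul (hQ k)) hR hRfin
      (balFactor_one_iff.1 hbf) (hQne.imp fun j hj => by rwa [ne_eq, mul_eq_zero_iff _ hl hl0])
    rw [signChanges_mul hl hl0] at hlt
    exact (le_signChanges_of_multGe hR hRne hmR).trans_lt hlt

end UpperBound

section LowerBound

variable {Q : ℕ → Bs} {i : ℕ}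

/-- Classically `R m = ⊖(Q 0 + ⋯ + Q m) = Q (m + 1) + ⋯` when `Q = (Y - 1) R`. Over `B_s` these
sums are represented by the last nonzero coefficient up to `m` for `m < i`, and by the first one
after `m` for `m ≥ i`; the two readings can be glued at the end `i` of a sign change. -/
noncomputable def quotientAt (Q : ℕ → Bs) (i m : ℕ) : Bs :=
  if m < i then sneg (prevNonzero Q (m + 1)) else nextNonzero Q m

lemma quotientAt_of_lt {m : ℕ} (hm : m < i) :
    quotientAt Q i m = sneg (prevNonzero Q (m + 1)) :=
  if_pos hm

lemma quotientAt_of_ge {m : ℕ} (hm : i ≤ m) : quotientAt Q i m = nextNonzero Q m :=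
  if_neg (by omega)

lemma isSigned_quotientAt (hQ : ∀ k, isSigned (Q k)) (m : ℕ) : isSigned (quotientAt Q i m) := by
  unfold quotientAt
  split
  exacts [(isSigned_prevNonzero hQ _).sneg, isSigned_nextNonzero hQ m]

lemma mulY_quotientAt_of_le {k : ℕ} (hk : k ≤ i) :
    mulY (quotientAt Q i) k = sneg (prevNonzero Q k) := by
  cases k with
  | zero => rfl
  | succ k => exact quotientAt_of_lt hk

lemma mulY_quotientAt_of_ge (hi : IsSignChangeEnd Q i) {k : ℕ} (hk : i ≤ k) :
    mulY (quotientAt Q i) k = if Q k = zero then nextNonzero Q k else Q k := by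
  rcases hk.eq_or_lt with rfl | hk
  · rw [mulY_quotientAt_of_le le_rfl, hi.2, sneg_sneg, if_neg hi.1]
  · obtain ⟨k, rfl⟩ := Nat.exists_eq_add_of_lt hk
    rw [← nextNonzero_eq_ite]
    exact quotientAt_of_ge (by omega)

lemma prevNonzero_quotientAt_of_le {k : ℕ} (hk : k ≤ i) :
    prevNonzero (quotientAt Q i) k = sneg (prevNonzero Q k) := by
  induction k with
  | zero => rfl
  | succ k ih =>
    rw [prevNonzero_succ, ih (by omega), quotientAt_of_lt (by omega), prevNonzero_succ]
    have : ∀ q p : Bs, (if sneg (if q = zero then p else q) = zero then sneg p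
        else sneg (if q = zero then p else q)) = sneg (if q = zero then p else q) := by decide
    exact this _ _

lemma balance_quotientAt (hQ : ∀ k, isSigned (Q k)) (hi : IsSignChangeEnd Q i) (k : ℕ) :
    nabla (Q k) (add (mulY (quotientAt Q i) k) (sneg (quotientAt Q i k))) := by
  rcases Nat.lt_or_ge k i with hk | hk
  · rw [mulY_quotientAt_of_le hk.le, quotientAt_of_lt hk, prevNonzero_succ]
    have : ∀ q p : Bs, isSigned q → isSigned p →
        nabla q (add (sneg p) (sneg (sneg (if q = zero then p else q)))) := by decide
    exact this _ _ (hQ k) (isSigned_prevNonzero hQ k)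
  · rw [mulY_quotientAt_of_ge hi hk, quotientAt_of_ge hk]
    have : ∀ q v : Bs, isSigned q → nabla q (add (if q = zero then v else q) (sneg v)) := by
      decide
    exact this _ _ (hQ k)

lemma isSignChangeEnd_quotientAt_iff (hQ : ∀ k, isSigned (Q k)) (hi : IsSignChangeEnd Q i)
    (hmin : ∀ j < i, ¬IsSignChangeEnd Q j) (m : ℕ) :
    IsSignChangeEnd (quotientAt Q i) m ↔ i ≤ m ∧ ∃ j, IsSignChange Q m j := by
  rcases Nat.lt_or_ge m i with hm | hm
  · simp only [show ¬i ≤ m by omega, false_and, iff_false]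
    intro hend
    refine hmin m hm ?_
    rw [IsSignChangeEnd, prevNonzero_quotientAt_of_le hm.le, quotientAt_of_lt hm,
      prevNonzero_succ] at hend
    have : ∀ q p : Bs, isSigned p → (sneg (if q = zero then p else q) ≠ zero ∧
        sneg p = sneg (sneg (if q = zero then p else q))) → q ≠ zero ∧ p = sneg q := by
      decide
    exact this _ _ (isSigned_prevNonzero hQ m) hend
  · have hi0 : i ≠ 0 := by
      rintro rfl
      exact hi.1 (by simpa [prevNonzero] using hi.2.symm)
    obtain ⟨m, rfl⟩ : ∃ m', m = m' + 1 := ⟨m - 1, by omega⟩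
    rw [IsSignChangeEnd, prevNonzero_succ,
      show quotientAt Q i m = mulY (quotientAt Q i) (m + 1) from rfl,
      mulY_quotientAt_of_ge hi hm, quotientAt_of_ge hm, exists_isSignChange_iff]
    have : ∀ q v p : Bs, isSigned v → ((v ≠ zero ∧ (if (if q = zero then v else q) = zero then p
        else (if q = zero then v else q)) = sneg v) ↔ (q ≠ zero ∧ q = sneg v)) := by decide
    simpa [hm] using this _ _ (prevNonzero (quotientAt Q i) m) (isSigned_nextNonzero hQ (m + 1))

lemma lt_iff_eq_of_isSignChange {j₀ m j : ℕ} (hj₀ : IsSignChange Q j₀ i)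
    (hmin : ∀ j < i, ¬IsSignChangeEnd Q j) (hm : IsSignChange Q m j) : m < i ↔ m = j₀ := by
  refine ⟨fun hmi => hm.left_unique ?_, fun h => h ▸ hj₀.1⟩
  have hij : i ≤ j := le_of_not_gt fun hji => hmin j hji (isSignChangeEnd_iff.2 ⟨m, hm⟩)
  rcases hij.eq_or_lt with rfl | hij
  exacts [hj₀, absurd (hm.2.2.2 i hmi hij) hj₀.ne_zero_right]

lemma signChanges_quotientAt (hQ : ∀ k, isSigned (Q k)) {N : ℕ}
    (hN : ∀ k, N < k → Q k = zero) (hi : IsSignChangeEnd Q i)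
    (hmin : ∀ j < i, ¬IsSignChangeEnd Q j) :
    signChanges (quotientAt Q i) + 1 = signChanges Q := by
  obtain ⟨j₀, hj₀⟩ := isSignChangeEnd_iff.1 hi
  have hfin : {m | ∃ j, IsSignChange Q m j}.Finite :=
    (Set.finite_Iic N).subset fun m ⟨j, h⟩ => not_lt.1 fun hm => h.2.1 (hN m hm)
  rw [signChanges_eq_ncard_ends, signChanges_eq_ncard,
    ← Set.ncard_sdiff_singleton_add_one (show j₀ ∈ {m | ∃ j, IsSignChange Q m j} from ⟨i, hj₀⟩)
      hfin]
  congr 2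
  ext m
  simp only [Set.mem_ofPred_eq, Set.mem_sdiff, Set.mem_singleton_iff,
    isSignChangeEnd_quotientAt_iff hQ hi hmin]
  constructor
  · rintro ⟨him, j, hm⟩
    exact ⟨⟨j, hm⟩, fun h => by have := (lt_iff_eq_of_isSignChange hj₀ hmin hm).2 h; omega⟩
  · rintro ⟨⟨j, hm⟩, hmj₀⟩
    exact ⟨not_lt.1 fun h => hmj₀ ((lt_iff_eq_of_isSignChange hj₀ hmin hm).1 h), j, hm⟩

lemma IsSignChange.isRoot_one (hQ : ∀ k, isSigned (Q k)) {N j : ℕ}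
    (hN : ∀ k, N < k → Q k = zero) (h : IsSignChange Q i j) : IsRoot Q one := by
  have hjN : j ≤ N := not_lt.1 fun hj => h.ne_zero_right (hN j hj)
  have hmem : ∀ k ≤ N, Q k ∈ (List.range (N + 1)).map fun k => mul (Q k) (spow one k) :=
    fun k hk => List.mem_map.2 ⟨k, List.mem_range.2 (by omega), by rw [spow_one, mul_one_right]⟩
  have hbal := lsum_eq_bal (hQ j) h.ne_zero_right (hmem j hjN)
    (h.2.2.1 ▸ hmem i (by have := h.1; omega))
  refine ⟨N, hN, ?_⟩
  rw [nabla, phat, hbal]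
  trivial

lemma exists_quotient_of_signChanges_ne_zero (hQ : ∀ k, isSigned (Q k)) {N : ℕ}
    (hN : ∀ k, N < k → Q k = zero) (h : signChanges Q ≠ 0) :
    IsRoot Q one ∧ ∃ R : ℕ → Bs, (∀ k, isSigned (R k)) ∧ (∀ k, N < k → R k = zero) ∧
      balFactor one one Q R ∧ signChanges R + 1 = signChanges Q := by
  have hex : ∃ i, IsSignChangeEnd Q i :=
    Set.nonempty_of_ncard_ne_zero (signChanges_eq_ncard_ends (Q := Q) ▸ h)
  have hi := Nat.find_spec hex
  obtain ⟨j₀, hj₀⟩ := isSignChangeEnd_iff.1 hi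
  have hiN : Nat.find hex ≤ N := not_lt.1 fun h => hi.1 (hN _ h)
  refine ⟨hj₀.isRoot_one hQ hN, quotientAt Q (Nat.find hex), isSigned_quotientAt hQ,
    fun k hk => ?_, balFactor_one_iff.2 fun k => by simpa using balance_quotientAt hQ hi k,
    signChanges_quotientAt hQ hN hi fun j hj => Nat.find_min hex hj⟩
  rw [quotientAt_of_ge (by omega)]
  by_contra h0
  obtain ⟨j, hkj, hj, -⟩ := exists_of_nextNonzero_ne_zero h0
  exact hj (hN j (by omega))

lemma multGe_of_le_signChanges :
    ∀ {m : ℕ} {Q : ℕ → Bs}, (∀ k, isSigned (Q k)) → (∃ N, ∀ k, N < k → Q k = zero) →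
      m ≤ signChanges Q → MultGe one m Q
  | 0, _, _, _, _ => trivial
  | m + 1, Q, hQ, ⟨N, hN⟩, hm => by
    obtain ⟨hroot, R, hR, hRN, hbf, hcount⟩ :=
      exists_quotient_of_signChanges_ne_zero hQ hN (by omega)
    exact ⟨hroot, one, R, trivial, by decide, hR, ⟨N, hRN⟩, hbf,
      multGe_of_le_signChanges hR ⟨N, hRN⟩ (by omega)⟩

end LowerBound

lemma multEq_one_signChanges {Q : ℕ → Bs} (hQ : ∀ k, isSigned (Q k)) (hQne : ∃ j, Q j ≠ zero)
    (hfin : ∃ N, ∀ k, N < k → Q k = zero) : MultEq one Q (signChanges Q) :=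
  ⟨multGe_of_le_signChanges hQ hfin le_rfl,
    fun h => (le_signChanges_of_multGe hQ hQne h).not_gt (Nat.lt_succ_self _)⟩

section Twist

variable {P Q : ℕ → Bs}

/-- The coefficients of `Q(⊖Y)`. -/
def twist (Q : ℕ → Bs) (i : ℕ) : Bs := if Even i then Q i else sneg (Q i)

@[simp] lemma twist_twist : twist (twist Q) = Q := funext fun i => by
  unfold twist
  split_ifs <;> simp

@[simp] lemma twist_eq_zero {i : ℕ} : twist Q i = zero ↔ Q i = zero := by
  unfold twist
  split_ifs <;> simp

lemma isSigned_twist (hQ : ∀ k, isSigned (Q k)) (i : ℕ) : isSigned (twist Q i) := by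
  unfold twist
  split_ifs
  exacts [hQ i, (hQ i).sneg]

lemma phat_twist (N : ℕ) (a : Bs) : phat (twist Q) N (sneg a) = phat Q N a := by
  unfold phat
  congr 1
  refine List.map_congr_left fun k _ => ?_
  rw [spow_sneg]
  unfold twist
  split_ifs <;> simp [sneg_mul, mul_sneg]

lemma IsRoot.twist {a : Bs} (h : IsRoot Q a) : IsRoot (twist Q) (sneg a) :=
  let ⟨N, hN, hbal⟩ := h
  ⟨N, fun k hk => twist_eq_zero.2 (hN k hk), by rwa [phat_twist]⟩

lemma balFactor_twist {a l : Bs} (h : balFactor a l P Q) :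
    balFactor (sneg a) (sneg l) (twist P) (twist Q) := by
  obtain ⟨hk, h0⟩ := h
  refine ⟨fun k hk1 => ?_, ?_⟩
  · obtain ⟨k, rfl⟩ := Nat.exists_eq_add_of_le' hk1
    have hk := hk (k + 1) hk1
    simp only [Nat.add_sub_cancel] at hk ⊢
    unfold twist
    by_cases he : Even k
    · have : ∀ l p r' r a : Bs, nabla (mul l p) (add r' (mul (sneg a) r)) →
          nabla (mul (sneg l) (sneg p)) (add r' (mul (sneg (sneg a)) (sneg r))) := by decide
      simpa [he, Nat.even_add_one] using this _ _ _ _ _ hk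
    · have : ∀ l p r' r a : Bs, nabla (mul l p) (add r' (mul (sneg a) r)) →
          nabla (mul (sneg l) p) (add (sneg r') (mul (sneg (sneg a)) r)) := by decide
      simpa [he, Nat.even_add_one] using this _ _ _ _ _ hk
  · have : ∀ l p r a : Bs, nabla (mul l p) (mul (sneg a) r) →
        nabla (mul (sneg l) p) (mul (sneg (sneg a)) r) := by decide
    simpa [twist] using this _ _ _ _ h0

lemma multGe_twist {a : Bs} :
    ∀ {m : ℕ} {P : ℕ → Bs}, MultGe a m P → MultGe (sneg a) m (twist P)
  | 0, _, _ => trivial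
  | m + 1, _, h => by
    obtain ⟨hroot, l, R, hl, hl0, hR, ⟨N, hN⟩, hbf, hmR⟩ := h
    exact ⟨hroot.twist, sneg l, twist R, hl.sneg, by simpa using hl0, isSigned_twist hR,
      ⟨N, fun k hk => twist_eq_zero.2 (hN k hk)⟩, balFactor_twist hbf, multGe_twist hmR⟩

lemma multGe_negOne_iff {m : ℕ} : MultGe negOne m P ↔ MultGe one m (twist P) :=
  ⟨multGe_twist, fun h => by simpa using multGe_twist (a := one) h⟩

end Twist

end Bs

/-- Baker–Lorscheid (Descartes for the hyperfield of signs): for a formal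
polynomial `Q` of degree `n` over `B_s` with signed coefficients, the
multiplicity of the root `𝟙` equals the number of sign changes in its nonzero
coefficients, and the multiplicity of the root `⊖𝟙` equals the number of sign
changes in the coefficients of `Q(⊖Y)`. -/
theorem bs_multiplicity_eq_sign_changes (Q : ℕ → Bs) (n : ℕ)
    (hQn : Q n ≠ Bs.zero) (hdeg : ∀ k, n < k → Q k = Bs.zero)
    (hsigned : ∀ k, Bs.isSigned (Q k)) :
    Bs.MultEq Bs.one Q (Bs.signChanges Q) ∧
    Bs.MultEq Bs.negOne Q
      (Bs.signChanges fun i => if Even i then Q i else Bs.sneg (Q i)) := by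
  have htwist := Bs.multEq_one_signChanges (Bs.isSigned_twist hsigned)
    ⟨n, fun h => hQn (Bs.twist_eq_zero.1 h)⟩ ⟨n, fun k hk => Bs.twist_eq_zero.2 (hdeg k hk)⟩
  exact ⟨Bs.multEq_one_signChanges hsigned ⟨n, hQn⟩ ⟨n, hdeg⟩,
    Bs.multGe_negOne_iff.2 htwist.1, fun h => htwist.2 (Bs.multGe_negOne_iff.1 h)⟩
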